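/- arXiv:1903.02417 — 8 statements merged into one kernel-verified Lean document; each statement's English description precedes it below -/
import Mathlib

section
/- Let S be a commutative semigroup. If A ⊆ S is a J-set and A = A₁ ∪ A₂, then A₁ is a J-set or A₂ is a J-set (i.e., the property of being a J-set is partition regular for 2-cell partitions). -/
/-- The sum `∑_{t ∈ H} f(t)` (in increasing order of `t`) in an additive semigroup,
with junk value `f 0` when `H = ∅`. -/
noncomputable def seqSum {S : Type*} [AddSemigroup S] (f : ℕ → S) (H : Finset ℕ) : S :=
  match (H.sort (· ≤ ·)).map f with
  | [] => f 0
  | a :: l => l.foldl (· + ·) a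

/-- `A` is a J-set: for every nonempty finite set `F` of sequences in `S` there exist
`a ∈ S` and a nonempty finite `H ⊆ ℕ` with `a + ∑_{t∈H} f(t) ∈ A` for all `f ∈ F`. -/
def IsJSet {S : Type*} [AddCommSemigroup S] (A : Set S) : Prop :=
  ∀ F : Finset (ℕ → S), F.Nonempty →
    ∃ a : S, ∃ H : Finset ℕ, H.Nonempty ∧ ∀ f ∈ F, a + seqSum f H ∈ A

private lemma coe_foldl {S : Type*} [AddCommSemigroup S] (x : S) (l : List S) :
    WithZero.coe (l.foldl (· + ·) x)
      = (WithZero.coe x) + (l.map (fun s : S => (WithZero.coe s))).sum := by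
  induction l generalizing x with
  | nil => simp
  | cons b l ih =>
    rw [List.foldl_cons, ih, List.map_cons, List.sum_cons, WithZero.coe_add, add_assoc]

private lemma seqSum_coe {S : Type*} [AddCommSemigroup S] (f : ℕ → S) (H : Finset ℕ)
    (hH : H.Nonempty) :
    WithZero.coe (seqSum f H) = ∑ t ∈ H, (WithZero.coe (f t)) := by
  have hs : H.sort (· ≤ ·) ≠ [] := by
    intro h
    have h2 := Finset.length_sort (α := ℕ) (· ≤ ·) (s := H)
    rw [h] at h2
    simp only [List.length_nil] at h2
    exact hH.ne_empty (Finset.card_eq_zero.mp h2.symm)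
  obtain ⟨b, l, hbl⟩ := List.exists_cons_of_ne_nil hs
  have hsum : ∑ t ∈ H, (WithZero.coe (f t))
      = ((H.sort (· ≤ ·)).map (fun t => WithZero.coe (f t))).sum := by
    rw [Finset.sum_eq_multiset_sum, ← Finset.sort_eq H (· ≤ ·), Multiset.map_coe,
      Multiset.sum_coe]
  rw [hsum, hbl]
  simp only [seqSum, hbl, List.map_cons, List.sum_cons]
  rw [coe_foldl, List.map_map]
  rfl

/-- J-sets are partition regular for 2-cell partitions. -/
theorem isJSet_union {S : Type*} [AddCommSemigroup S] (A A₁ A₂ : Set S)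
    (hA : A = A₁ ∪ A₂) (hJ : IsJSet A) :
    IsJSet A₁ ∨ IsJSet A₂ := by
  classical
  by_contra hcon
  push_neg at hcon
  obtain ⟨h1, h2⟩ := hcon
  unfold IsJSet at h1 h2
  push_neg at h1 h2
  obtain ⟨F₁, hF₁ne, hF₁⟩ := h1
  obtain ⟨F₂, hF₂ne, hF₂⟩ := h2
  set α : Type _ := {f : ℕ → S // f ∈ F₁ ∪ F₂} with hα
  haveI : Finite α := inferInstance
  obtain ⟨f₀, hf₀⟩ := hF₁ne
  have x₀ : α := ⟨f₀, Finset.mem_union_left _ hf₀⟩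
  obtain ⟨ι, ιfin, hHJ⟩ := Combinatorics.Line.exists_mono_in_high_dimension α Prop
  haveI := ιfin
  haveI : Nonempty ι := by
    obtain ⟨l₀, -⟩ := hHJ fun _ => True
    obtain ⟨i₀, -⟩ := l₀.proper
    exact ⟨i₀⟩
  set N := Fintype.card ι with hNdef
  have hN : 0 < N := Fintype.card_pos
  set e : ι ≃ Fin N := Fintype.equivFin ι with he
  -- the encoding of pairs (t, i) into ℕ
  set code : ℕ → ι → ℕ := fun t i => N * t + (e i : ℕ) with hcode
  have hcode_inj : ∀ t i t' i', code t i = code t' i' → t = t' ∧ i = i' := by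
    intro t i t' i' h
    have hmod : ∀ (t : ℕ) (i : ι), code t i % N = (e i : ℕ) := by
      intro t i
      simp only [hcode, Nat.mul_add_mod]
      exact Nat.mod_eq_of_lt (e i).isLt
    have hdiv : ∀ (t : ℕ) (i : ι), code t i / N = t := by
      intro t i
      simp only [hcode]
      rw [Nat.mul_add_div hN, Nat.div_eq_of_lt (e i).isLt, Nat.add_zero]
    constructor
    · rw [← hdiv t i, ← hdiv t' i', h]
    · have : (e i : ℕ) = (e i' : ℕ) := by rw [← hmod t i, ← hmod t' i', h]
      exact e.injective (Fin.ext this)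
  -- the sequence associated to a word
  set q : (ι → α) → ℕ → S :=
    fun w s => ((w (e.symm ⟨s % N, Nat.mod_lt _ hN⟩) : α) : ℕ → S) s with hqdef
  have hq : ∀ w t i, q w (code t i) = ((w i : α) : ℕ → S) (code t i) := by
    intro w t i
    have hmod : code t i % N = (e i : ℕ) := by
      simp only [hcode, Nat.mul_add_mod]
      exact Nat.mod_eq_of_lt (e i).isLt
    simp only [hqdef]
    rw [show (⟨code t i % N, Nat.mod_lt _ hN⟩ : Fin N) = e i from Fin.ext hmod,
      Equiv.symm_apply_apply]
  set blk : ℕ → Finset ℕ := fun t => Finset.image (fun i => code t i) Finset.univ with hblk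
  have hblkne : ∀ t, (blk t).Nonempty :=
    fun t => (Finset.image_nonempty).mpr Finset.univ_nonempty
  set h : (ι → α) → ℕ → S := fun w t => seqSum (q w) (blk t) with hh
  have key1 : ∀ (w : ι → α) (t : ℕ),
      WithZero.coe (h w t) = ∑ i : ι, WithZero.coe (((w i : α) : ℕ → S) (code t i)) := by
    intro w t
    rw [hh]
    rw [seqSum_coe _ _ (hblkne t), hblk]
    rw [Finset.sum_image (fun i _ i' _ hc => (hcode_inj t i t i' hc).2)]
    exact Finset.sum_congr rfl fun i _ => by rw [hq]
  -- apply the J-set property of A to the family of all word-sequences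
  set F' : Finset (ℕ → S) := Finset.image h Finset.univ with hF'
  obtain ⟨a, H, hHne, ha⟩ := hJ F'
    ⟨h fun _ => x₀, Finset.mem_image_of_mem _ (Finset.mem_univ _)⟩
  have hA' : ∀ w : ι → α, a + seqSum (h w) H ∈ A :=
    fun w => ha _ (Finset.mem_image_of_mem _ (Finset.mem_univ _))
  -- color the words and take a monochromatic line
  set C : (ι → α) → Prop := fun w => a + seqSum (h w) H ∈ A₁ with hC
  obtain ⟨l, c, hc⟩ := hHJ C
  have hc' : ∀ x : α, (a + seqSum (h (l x)) H ∈ A₁) = c := fun x => hc x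
  set V : Finset ι := Finset.univ.filter (fun i => l.idxFun i = none) with hV
  have hVne : V.Nonempty := by
    obtain ⟨i, hi⟩ := l.proper
    exact ⟨i, Finset.mem_filter.mpr ⟨Finset.mem_univ _, hi⟩⟩
  set K : Finset ℕ := Finset.image (fun p : ℕ × ι => code p.1 p.2) (H ×ˢ V) with hK
  have hKne : K.Nonempty := (Finset.image_nonempty).mpr (hHne.product hVne)
  -- the constant contribution
  set D : WithZero S := ∑ t ∈ H, ∑ i ∈ Finset.univ.filter (fun i => ¬ l.idxFun i = none),
    WithZero.coe ((((l.idxFun i).getD x₀ : α) : ℕ → S) (code t i)) with hD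
  have hsplit : ∀ x : α,
      WithZero.coe (a + seqSum (h (l x)) H)
        = ((WithZero.coe a) + D) + ∑ s ∈ K, WithZero.coe ((x : ℕ → S) s) := by
    intro x
    rw [WithZero.coe_add, seqSum_coe _ _ hHne]
    have hterm : ∀ t ∈ H, WithZero.coe (h (l x) t)
        = (∑ i ∈ V, WithZero.coe ((x : ℕ → S) (code t i)))
          + ∑ i ∈ Finset.univ.filter (fun i => ¬ l.idxFun i = none),
              WithZero.coe ((((l.idxFun i).getD x₀ : α) : ℕ → S) (code t i)) := by
      intro t _
      rw [key1 (l x) t]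
      rw [← Finset.sum_filter_add_sum_filter_not Finset.univ (fun i => l.idxFun i = none)]
      congr 1
      · refine Finset.sum_congr rfl fun i hi => ?_
        have hi' : l.idxFun i = none := (Finset.mem_filter.mp hi).2
        have : l x i = x := by rw [Combinatorics.Line.coe_apply, hi']; rfl
        rw [this]
      · refine Finset.sum_congr rfl fun i hi => ?_
        have hi' : ¬ l.idxFun i = none := (Finset.mem_filter.mp hi).2
        have : l x i = (l.idxFun i).getD x₀ := by
          rw [Combinatorics.Line.coe_apply]
          cases hcase : l.idxFun i with
          | none => exact absurd hcase hi'
          | some b => rfl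
        rw [this]
    rw [Finset.sum_congr rfl hterm, Finset.sum_add_distrib]
    have himg : ∑ s ∈ K, WithZero.coe ((x : ℕ → S) s)
        = ∑ t ∈ H, ∑ i ∈ V, WithZero.coe ((x : ℕ → S) (code t i)) := by
      rw [hK, Finset.sum_image]
      · rw [Finset.sum_product]
      · intro p hp p' hp' hpc
        have := hcode_inj p.1 p.2 p'.1 p'.2 hpc
        exact Prod.ext this.1 this.2
    rw [himg, ← hD]
    abel
  obtain ⟨a', ha'⟩ : ∃ a' : S, WithZero.coe a' = WithZero.coe a + D := by
    induction D using WithZero.recZeroCoe with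
    | zero => exact ⟨a, by rw [add_zero]⟩
    | coe d => exact ⟨a + d, WithZero.coe_add ..⟩
  have heq : ∀ x : α, a' + seqSum ((x : α) : ℕ → S) K = a + seqSum (h (l x)) H := by
    intro x
    apply WithZero.coe_inj.mp
    rw [hsplit x, WithZero.coe_add, ha', seqSum_coe _ _ hKne]
  -- conclude
  by_cases hcp : c
  · have hall : ∀ x : α, a' + seqSum ((x : α) : ℕ → S) K ∈ A₁ := by
      intro x
      rw [heq x]
      rw [hc' x]
      exact hcp
    obtain ⟨f, hfF₁, hfnot⟩ := hF₁ a' K hKne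
    exact hfnot (hall ⟨f, Finset.mem_union_left _ hfF₁⟩)
  · have hall : ∀ x : α, a' + seqSum ((x : α) : ℕ → S) K ∈ A₂ := by
      intro x
      have hnotA₁ : a + seqSum (h (l x)) H ∉ A₁ := by
        intro hmem
        exact hcp ((hc' x) ▸ hmem)
      have hinA : a + seqSum (h (l x)) H ∈ A₁ ∪ A₂ := hA ▸ hA' (l x)
      rw [heq x]
      exact hinA.resolve_left hnotA₁
    obtain ⟨f, hfF₂, hfnot⟩ := hF₂ a' K hKne
    exact hfnot (hall ⟨f, Finset.mem_union_right _ hfF₂⟩)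
end

section
/- Let S be a commutative semigroup and A ⊆ S a J-set. Then for every m ∈ ℕ and every finite nonempty set F of sequences in S, there exist a ∈ S and a nonempty finite H ⊆ ℕ with min H > m such that for each f ∈ F, a + ∑_{t ∈ H} f(t) ∈ A. -/
lemma sort_image (σ : ℕ → ℕ) (hσ : StrictMono σ) (H : Finset ℕ) :
    (H.image σ).sort (· ≤ ·) = (H.sort (· ≤ ·)).map σ := by
  have hperm : List.Perm ((H.image σ).sort (· ≤ ·)) ((H.sort (· ≤ ·)).map σ) := by
    rw [← Multiset.coe_eq_coe, Finset.sort_eq, ← Multiset.map_coe, Finset.sort_eq,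
      Finset.image_val, Multiset.dedup_eq_self.mpr]
    exact (H.nodup.map hσ.injective)
  have h2 : ((H.sort (· ≤ ·)).map σ).Pairwise (· ≤ ·) :=
    (List.pairwise_map).mpr ((Finset.pairwise_sort H _).imp fun h => hσ.le_iff_le.mpr h)
  exact List.Perm.eq_of_pairwise' (Finset.pairwise_sort _ _) h2 hperm

lemma seqSum_image {S : Type*} [AddSemigroup S] (f : ℕ → S) (σ : ℕ → ℕ) (hσ : StrictMono σ)
    (H : Finset ℕ) (hH : H.Nonempty) : seqSum f (H.image σ) = seqSum (f ∘ σ) H := by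
  unfold seqSum
  rw [sort_image σ hσ H, List.map_map]
  have hne : H.sort (· ≤ ·) ≠ [] := by
    intro h
    have := Finset.length_sort (α := ℕ) (· ≤ ·) (s := H)
    rw [h] at this
    have hc := Finset.card_pos.mpr hH
    simp at this
    omega
  obtain ⟨l, L, hl⟩ := List.exists_cons_of_ne_nil hne
  simp [hl]


/-- In a J-set one can always choose `H` with `min H > m`. -/
theorem isJSet_min_gt {S : Type*} [AddCommSemigroup S] (A : Set S) (hJ : IsJSet A) :
    ∀ m : ℕ, ∀ F : Finset (ℕ → S), F.Nonempty →
      ∃ a : S, ∃ H : Finset ℕ, H.Nonempty ∧ (∀ t ∈ H, m < t) ∧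
        ∀ f ∈ F, a + seqSum f H ∈ A := by
  intro m F hF
  classical
  set σ : ℕ → ℕ := fun t => t + (m + 1) with hσdef
  have hσ : StrictMono σ := fun a b h => by simpa [σ] using h
  obtain ⟨a, H, hHne, hmem⟩ := hJ (F.image fun f => f ∘ σ) (hF.image _)
  refine ⟨a, H.image σ, hHne.image _, ?_, ?_⟩
  · intro t ht
    obtain ⟨s, _, rfl⟩ := Finset.mem_image.mp ht
    simp [σ]
    omega
  · intro f hf
    rw [seqSum_image f σ hσ H hHne]
    exact hmem _ (Finset.mem_image_of_mem _ hf)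
end

section
/- Let S be a commutative semigroup. The set J(S) = {p ∈ βS : every A ∈ p is a J-set} is a closed (compact) two-sided ideal of βS. -/
open Filter

attribute [local instance] Ultrafilter.add Ultrafilter.addSemigroup

set_option linter.unusedSectionVars false

namespace JAux
variable {S : Type*} [AddCommSemigroup S]

lemma coe_foldl (l : List S) (a : S) :
    ((l.foldl (· + ·) a : S) : WithZero S) = (a : WithZero S) + (l.map (↑· : S → WithZero S)).sum := by
  induction l generalizing a with
  | nil => simp
  | cons b t ih => simp [ih (a + b), add_assoc]

lemma coe_seqSum (f : ℕ → S) (H : Finset ℕ) (hH : H.Nonempty) :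
    ((seqSum f H : S) : WithZero S) = ∑ t ∈ H, ((f t : S) : WithZero S) := by
  have hs : (H.sort (· ≤ ·)) ≠ [] := by
    intro h
    have := congrArg List.length h
    rw [Finset.length_sort] at this
    simp [Finset.card_eq_zero] at this
    exact hH.ne_empty this
  obtain ⟨b, l, hl⟩ := List.exists_cons_of_ne_nil hs
  have h1 : seqSum f H = (l.map f).foldl (· + ·) (f b) := by
    unfold seqSum
    rw [hl]
    simp
  have h2 : ∑ t ∈ H, ((f t : S) : WithZero S) =
      (((H.sort (· ≤ ·)).map f).map (↑· : S → WithZero S)).sum := by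
    rw [Finset.sum, show H.val = ↑(H.sort (· ≤ ·)) from (Finset.sort_eq _ _).symm,
      Multiset.map_coe, Multiset.sum_coe, List.map_map]
    rfl
  rw [h1, coe_foldl, h2, hl]
  simp
end JAux

namespace JB
variable {S : Type*} [AddCommSemigroup S] [Nonempty S]
open JAux

lemma isJSet_univ : IsJSet (Set.univ : Set S) := fun _ _ =>
  ⟨Classical.arbitrary S, {0}, Finset.singleton_nonempty 0, fun _ _ => trivial⟩

lemma not_isJSet_empty : ¬ IsJSet (∅ : Set S) := by
  intro h
  obtain ⟨a, H, hH, hm⟩ := h {fun _ => Classical.arbitrary S}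
    ⟨_, Finset.mem_singleton_self _⟩
  exact hm _ (Finset.mem_singleton_self _)

lemma exists_coe_sum {β : Type*} (T : Finset β) (hT : T.Nonempty) (h : β → S) :
    ∃ s : S, (s : WithZero S) = ∑ b ∈ T, (h b : WithZero S) := by
  classical
  induction hT using Finset.Nonempty.cons_induction with
  | singleton b => exact ⟨h b, by simp⟩
  | cons b T hb hT ih =>
      obtain ⟨s, hs⟩ := ih
      exact ⟨h b + s, by rw [WithZero.coe_add, hs, Finset.sum_cons]⟩

lemma pointwise {A B : Set S} (hC : IsJSet (A ∪ B)) (F : Finset (ℕ → S)) (hF : F.Nonempty) :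
    ∃ a H, Finset.Nonempty H ∧
      ((∀ f ∈ F, a + seqSum f H ∈ A) ∨ (∀ f ∈ F, a + seqSum f H ∈ B)) := by
  classical
  obtain ⟨f₀, hf₀⟩ := hF
  haveI hα : Nonempty {f // f ∈ F} := ⟨⟨f₀, hf₀⟩⟩
  obtain ⟨ι, ιfin, hHJ⟩ := Combinatorics.Line.exists_mono_in_high_dimension {f // f ∈ F} Bool
  haveI hι : Nonempty ι := by
    obtain ⟨l, _⟩ := hHJ fun _ => true
    obtain ⟨i, _⟩ := l.proper
    exact ⟨i⟩
  set m := Fintype.card ι with hmdef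
  have hm0 : 0 < m := Fintype.card_pos
  set e : ι ≃ Fin m := Fintype.equivFin ι with hedef
  have hinj : ∀ (t : ℕ) (i : ι) (t' : ℕ) (i' : ι),
      t * m + (e i : ℕ) = t' * m + (e i' : ℕ) → t = t' ∧ i = i' := by
    intro t i t' i' h
    have e1 : ∀ (t r : ℕ), (t * m + r) % m = r % m := fun t r => by
      rw [add_comm, Nat.add_mul_mod_self_right]
    have e2 : ∀ (t r : ℕ), r < m → (t * m + r) / m = t := fun t r hr => by
      rw [add_comm, Nat.add_mul_div_right _ _ hm0, Nat.div_eq_of_lt hr, zero_add]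
    have h1 : (e i : ℕ) = (e i' : ℕ) := by
      have := congrArg (· % m) h
      simp only [e1] at this
      simpa [Nat.mod_eq_of_lt (e i).isLt, Nat.mod_eq_of_lt (e i').isLt] using this
    have h2 : t = t' := by
      have := congrArg (· / m) h
      simpa [e2 t _ (e i).isLt, e2 t' _ (e i').isLt] using this
    exact ⟨h2, e.injective (Fin.ext h1)⟩
  set g : (ι → {f // f ∈ F}) → ℕ → S := fun w t =>
    seqSum (fun k => (w (e.symm ⟨k % m, Nat.mod_lt k hm0⟩)).1 (t * m + k % m))
      (Finset.range m) with hgdef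
  have hg : ∀ w t, ((g w t : S) : WithZero S)
      = ∑ i : ι, ((w i).1 (t * m + (e i : ℕ)) : WithZero S) := by
    intro w t
    rw [hgdef]
    rw [coe_seqSum _ _ (Finset.nonempty_range_iff.mpr hm0.ne')]
    rw [← Fin.sum_univ_eq_sum_range]
    rw [← Equiv.sum_comp e.symm (fun i : ι => (((w i).1 (t * m + (e i : ℕ)) : S) : WithZero S))]
    apply Finset.sum_congr rfl
    intro j _
    have hj : ((⟨(j : ℕ) % m, Nat.mod_lt _ hm0⟩ : Fin m)) = j := Fin.ext (Nat.mod_eq_of_lt j.isLt)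
    simp [hj, Nat.mod_eq_of_lt j.isLt]
  set G : Finset (ℕ → S) := Finset.image g Finset.univ with hGdef
  have hG : G.Nonempty := ⟨g (Classical.arbitrary _), Finset.mem_image_of_mem _ (Finset.mem_univ _)⟩
  obtain ⟨a, H, hH, hmem⟩ := hC G hG
  set C : (ι → {f // f ∈ F}) → Bool :=
    fun w => if a + seqSum (g w) H ∈ A then true else false with hCdef
  obtain ⟨l, c, hc⟩ := hHJ C
  set M : Finset ι := Finset.univ.filter (fun i => l.idxFun i = none) with hMdef
  have hM : M.Nonempty := by
    obtain ⟨i, hi⟩ := l.proper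
    exact ⟨i, by simp [hMdef, hi]⟩
  set H' : Finset ℕ := (H ×ˢ M).image (fun p => p.1 * m + (e p.2 : ℕ)) with hH'def
  have hH' : H'.Nonempty := (hH.product hM).image _
  -- the constant part
  set Mc : Finset ι := Finset.univ.filter (fun i => ¬ l.idxFun i = none) with hMcdef
  set x₀ : {f // f ∈ F} := Classical.arbitrary _ with hx₀def
  set fix : ι → (ℕ → S) := fun i => ((l.idxFun i).getD x₀).1 with hfixdef
  have hfix : ∀ (x : {f // f ∈ F}) (i : ι), i ∈ Mc → (l x i).1 = fix i := by
    intro x i hi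
    rw [hMcdef] at hi
    simp only [Finset.mem_filter] at hi
    cases hcase : l.idxFun i with
    | none => exact absurd hcase hi.2
    | some y => simp [Combinatorics.Line.coe_apply, hcase, hfixdef]
  have hconst : ∃ a' : S, ((a' : WithZero S)
      = (a : WithZero S) + ∑ p ∈ H ×ˢ Mc, ((fix p.2 (p.1 * m + (e p.2 : ℕ)) : S) : WithZero S)) := by
    rcases Finset.eq_empty_or_nonempty (H ×ˢ Mc) with hemp | hne
    · exact ⟨a, by simp [hemp]⟩
    · obtain ⟨s, hs⟩ := exists_coe_sum (H ×ˢ Mc) hne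
        (fun p => fix p.2 (p.1 * m + (e p.2 : ℕ)))
      exact ⟨a + s, by rw [WithZero.coe_add, hs]⟩
  obtain ⟨a', ha'⟩ := hconst
  -- the key identity
  have key : ∀ (f : ℕ → S) (hf : f ∈ F),
      a + seqSum (g (l ⟨f, hf⟩)) H = a' + seqSum f H' := by
    intro f hf
    set x : {f // f ∈ F} := ⟨f, hf⟩ with hxdef
    show a + seqSum (g (l x)) H = a' + seqSum x.1 H'
    apply WithZero.coe_inj.1
    rw [WithZero.coe_add, WithZero.coe_add, ha',
      coe_seqSum _ _ hH, coe_seqSum _ _ hH']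
    have hsplit : ∀ t : ℕ, ((g (l x) t : S) : WithZero S)
        = (∑ i ∈ M, ((x.1 (t * m + (e i : ℕ)) : S) : WithZero S))
          + ∑ i ∈ Mc, ((fix i (t * m + (e i : ℕ)) : S) : WithZero S) := by
      intro t
      rw [hg (l x) t]
      rw [← Finset.sum_filter_add_sum_filter_not Finset.univ (fun i => l.idxFun i = none)]
      congr 1
      · apply Finset.sum_congr rfl
        intro i hi
        simp only [Finset.mem_filter] at hi
        simp [hi.2]
      · apply Finset.sum_congr rfl
        intro i hi
        rw [hfix x i hi]
    rw [Finset.sum_congr rfl (fun t _ => hsplit t), Finset.sum_add_distrib]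
    rw [← Finset.sum_product' (s := H) (t := M)
      (f := fun t i => ((x.1 (t * m + (e i : ℕ)) : S) : WithZero S))]
    rw [← Finset.sum_product' (s := H) (t := Mc)
      (f := fun t i => ((fix i (t * m + (e i : ℕ)) : S) : WithZero S))]
    rw [hH'def, Finset.sum_image (by
      intro p hp q hq hpq
      obtain ⟨h1, h2⟩ := hinj p.1 p.2 q.1 q.2 hpq
      exact Prod.ext h1 h2)]
    abel
  refine ⟨a', H', hH', ?_⟩
  cases hcval : c with
  | true =>
      left
      intro f hf
      have h1 := hc ⟨f, hf⟩
      rw [hcval, hCdef] at h1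
      have hP : a + seqSum (g (l ⟨f, hf⟩)) H ∈ A := by
        by_contra hP
        simp only [hP, if_false] at h1
        exact Bool.false_ne_true h1
      rw [key f hf] at hP
      exact hP
  | false =>
      right
      intro f hf
      have hAB : a' + seqSum f H' ∈ A ∪ B := by
        rw [← key f hf]
        exact hmem _ (Finset.mem_image_of_mem _ (Finset.mem_univ _))
      refine hAB.resolve_left ?_
      intro hA
      have h1 := hc ⟨f, hf⟩
      rw [hcval, hCdef] at h1
      rw [← key f hf] at hA
      simp [hA] at h1
end JB

namespace JC
variable {S : Type*} [AddCommSemigroup S] [Nonempty S]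
open JAux JB

lemma partition_regular {A B : Set S} (hC : IsJSet (A ∪ B)) : IsJSet A ∨ IsJSet B := by
  classical
  by_contra hcon
  push_neg at hcon
  obtain ⟨hA, hB⟩ := hcon
  rw [IsJSet] at hA hB
  push_neg at hA hB
  obtain ⟨F₁, hF₁, hbad₁⟩ := hA
  obtain ⟨F₂, hF₂, hbad₂⟩ := hB
  obtain ⟨a, H, hH, hor⟩ := pointwise hC (F₁ ∪ F₂) (by
    obtain ⟨f, hf⟩ := hF₁
    exact ⟨f, Finset.mem_union_left _ hf⟩)
  rcases hor with h | h
  · obtain ⟨f, hf, hnot⟩ := hbad₁ a H hH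
    exact hnot (h f (Finset.mem_union_left _ hf))
  · obtain ⟨f, hf, hnot⟩ := hbad₂ a H hH
    exact hnot (h f (Finset.mem_union_right _ hf))

lemma finite_union {t : Set (Set S)} (ht : t.Finite) (h : IsJSet (⋃₀ t)) :
    ∃ B ∈ t, IsJSet B := by
  revert h
  refine Set.Finite.induction_on (motive := fun u _ => IsJSet (⋃₀ u) → ∃ B ∈ u, IsJSet B) t ht ?_ ?_
  · intro h; simp only [Set.sUnion_empty] at h; exact absurd h not_isJSet_empty
  · intro B t' hBt htfin ih h
    rw [Set.sUnion_insert] at h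
    rcases partition_regular h with h1 | h1
    · exact ⟨B, Set.mem_insert _ _, h1⟩
    · obtain ⟨B', hB', hB'J⟩ := ih h1
      exact ⟨B', Set.mem_insert_of_mem _ hB', hB'J⟩

lemma isJSet_shift {A : Set S} (x : S) (h : IsJSet {y | x + y ∈ A}) : IsJSet A := by
  intro F hF
  obtain ⟨a, H, hH, hm⟩ := h F hF
  exact ⟨x + a, H, hH, fun f hf => by
    have := hm f hf
    simpa [add_assoc] using this⟩

end JC


/-- `J(S) = {p ∈ βS : every A ∈ p is a J-set}` is a nonempty closed
(hence compact) two-sided ideal of `βS`. -/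
theorem JSet_ultrafilters_ideal {S : Type*} [AddCommSemigroup S] [Nonempty S] :
    let J : Set (Ultrafilter S) := {p | ∀ A ∈ p, IsJSet A}
    J.Nonempty ∧ IsClosed J ∧ IsCompact J ∧
      ∀ p ∈ J, ∀ q : Ultrafilter S, q + p ∈ J ∧ p + q ∈ J := by
  classical
  intro J
  have hclosed : IsClosed J := by
    have hJeq : J = ⋂ (A : Set S) (_ : ¬ IsJSet A), {p : Ultrafilter S | Aᶜ ∈ p} := by
      ext p
      simp only [Set.mem_iInter, Set.mem_setOf_eq, J]
      constructor
      · intro hp A hA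
        rw [Ultrafilter.compl_mem_iff_notMem]
        exact fun hmem => hA (hp A hmem)
      · intro hp A hA
        by_contra hA'
        exact (Ultrafilter.compl_mem_iff_notMem.mp (hp A hA')) hA
    rw [hJeq]
    exact isClosed_iInter fun A => isClosed_iInter fun _ => ultrafilter_isClosed_basic _
  have hne : J.Nonempty := by
    set s : Set (Set S) := {B | ¬ IsJSet Bᶜ} with hsdef
    have hgen : (Filter.generate s).NeBot := by
      rw [Filter.generate_neBot_iff]
      intro t hts htfin
      by_contra hempty
      rw [Set.not_nonempty_iff_eq_empty] at hempty
      have hcover : ⋃₀ (compl '' t) = (Set.univ : Set S) := by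
        rw [← Set.compl_sInter, hempty, Set.compl_empty]
      have hJu : IsJSet (⋃₀ (compl '' t)) := by
        rw [hcover]; exact JB.isJSet_univ
      obtain ⟨B', hB', hB'J⟩ := JC.finite_union (htfin.image compl) hJu
      obtain ⟨B, hB, rfl⟩ := hB'
      exact (hts hB) (by simpa using hB'J)
    obtain ⟨u, hu⟩ := Ultrafilter.exists_le (Filter.generate s)
    refine ⟨u, ?_⟩
    intro A hA
    by_contra hAJ
    have h1 : Aᶜ ∈ Filter.generate s :=
      Filter.mem_generate_of_mem (show Aᶜ ∈ s by simp [hsdef, hAJ])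
    have h2 : Aᶜ ∈ u := hu h1
    exact (Ultrafilter.compl_mem_iff_notMem.mp h2) hA
  refine ⟨hne, hclosed, hclosed.isCompact, ?_⟩
  intro p hp q
  constructor
  · intro A hA
    have h1 : ∀ᶠ x in ↑q, ∀ᶠ y in ↑p, x + y ∈ A :=
      (Ultrafilter.eventually_add q p (· ∈ A)).mp hA
    obtain ⟨x, hx⟩ := Ultrafilter.nonempty_of_mem (show {x | ∀ᶠ y in ↑p, x + y ∈ A} ∈ q from h1)
    exact JC.isJSet_shift x (hp _ hx)
  · intro A hA
    have h1 : ∀ᶠ x in ↑p, ∀ᶠ y in ↑q, x + y ∈ A :=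
      (Ultrafilter.eventually_add p q (· ∈ A)).mp hA
    have hBJ : IsJSet {x : S | ∀ᶠ y in ↑q, x + y ∈ A} := hp _ h1
    intro F hF
    obtain ⟨a, H, hH, hm⟩ := hBJ F hF
    have hint : (⋂ f ∈ F, {y : S | (a + seqSum f H) + y ∈ A}) ∈ q := by
      rw [← Ultrafilter.mem_coe, Filter.biInter_finset_mem]
      intro f hf
      exact hm f hf
    obtain ⟨y, hy⟩ := Ultrafilter.nonempty_of_mem hint
    refine ⟨a + y, H, hH, fun f hf => ?_⟩
    have hy' : (a + seqSum f H) + y ∈ A := by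
      simp only [Set.mem_iInter] at hy
      exact hy f hf
    rwa [add_right_comm] at hy'
end

section
/- Let S be a discrete semigroup and A ⊆ S. Then A is piecewise syndetic if and only if cl_{βS}(A) ∩ K(βS) ≠ ∅, where K(βS) is the smallest two-sided ideal of βS. -/
open Filter

attribute [local instance] Ultrafilter.add Ultrafilter.addSemigroup

/-- `-t + A = {y : t + y ∈ A}`. -/
def negAdd {S : Type*} [Add S] (t : S) (A : Set S) : Set S := {y | t + y ∈ A}

/-- `A` is piecewise syndetic: there is a finite nonempty `G ⊆ S` such that the family
`{-a + (⋃_{t∈G}(-t+A)) : a ∈ S}` has the finite intersection property. -/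
def IsPWS {S : Type*} [AddSemigroup S] (A : Set S) : Prop :=
  ∃ G : Finset S, G.Nonempty ∧
    ∀ F : Finset S, (⋂ a ∈ F, negAdd a (⋃ t ∈ G, negAdd t A)).Nonempty

section Aux

variable {S : Type*} [AddSemigroup S]

lemma mem_negAdd {t y : S} {A : Set S} : y ∈ negAdd t A ↔ t + y ∈ A := Iff.rfl

lemma isPWS_iff (A : Set S) :
    IsPWS A ↔ ∃ G : Finset S, G.Nonempty ∧
      ∀ F : Finset S, ∃ y, ∀ a ∈ F, ∃ t ∈ G, t + (a + y) ∈ A := by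
  unfold IsPWS
  refine exists_congr fun G => and_congr_right fun _ => forall_congr' fun F => ?_
  constructor
  · rintro ⟨y, hy⟩
    refine ⟨y, fun a ha => ?_⟩
    simp only [Set.mem_iInter] at hy
    have := hy a ha
    simp only [mem_negAdd, Set.mem_iUnion] at this
    obtain ⟨t, ht, h⟩ := this
    exact ⟨t, ht, h⟩
  · rintro ⟨y, hy⟩
    refine ⟨y, ?_⟩
    simp only [Set.mem_iInter]
    intro a ha
    obtain ⟨t, ht, h⟩ := hy a ha
    simp only [mem_negAdd, Set.mem_iUnion]
    exact ⟨t, ht, h⟩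

lemma isPWS_univ [Nonempty S] : IsPWS (Set.univ : Set S) := by
  rw [isPWS_iff]
  obtain ⟨x⟩ := ‹Nonempty S›
  exact ⟨{x}, Finset.singleton_nonempty _,
    fun F => ⟨x, fun a _ => ⟨x, Finset.mem_singleton_self _, trivial⟩⟩⟩

lemma not_isPWS_empty [Nonempty S] : ¬ IsPWS (∅ : Set S) := by
  rw [isPWS_iff]
  rintro ⟨G, hGne, hG⟩
  obtain ⟨x⟩ := ‹Nonempty S›
  obtain ⟨y, hy⟩ := hG {x}
  obtain ⟨t, -, ht⟩ := hy x (Finset.mem_singleton_self _)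
  exact ht

/-- If `-x + C` is piecewise syndetic, so is `C`. -/
lemma isPWS_of_negAdd {x : S} {C : Set S} (h : IsPWS (negAdd x C)) : IsPWS C := by
  classical
  rw [isPWS_iff] at h ⊢
  obtain ⟨G, hGne, hG⟩ := h
  refine ⟨G.image (fun t => x + t), hGne.image _, fun F => ?_⟩
  obtain ⟨y, hy⟩ := hG F
  refine ⟨y, fun a ha => ?_⟩
  obtain ⟨t, htG, ht⟩ := hy a ha
  refine ⟨x + t, Finset.mem_image_of_mem _ htG, ?_⟩
  rw [add_assoc]
  exact ht

/-- If `{x | -x + C ∈ q}` is piecewise syndetic for an ultrafilter `q`, so is `C`. -/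
lemma isPWS_of_pull {C : Set S} {q : Ultrafilter S}
    (h : IsPWS {x | negAdd x C ∈ q}) : IsPWS C := by
  rw [isPWS_iff] at h ⊢
  obtain ⟨G, hGne, hG⟩ := h
  refine ⟨G, hGne, fun F => ?_⟩
  obtain ⟨z, hz⟩ := hG F
  have hW : (⋂ a ∈ F, {w | ∃ t ∈ G, t + (a + z) + w ∈ C}) ∈ q := by
    refine (Filter.biInter_finset_mem F).mpr ?_
    intro a ha
    obtain ⟨t, htG, htq⟩ := hz a ha
    exact Filter.mem_of_superset htq (fun w hw => ⟨t, htG, hw⟩)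
  obtain ⟨w, hw⟩ := Ultrafilter.nonempty_of_mem hW
  simp only [Set.mem_iInter, Set.mem_setOf_eq] at hw
  refine ⟨z + w, fun a ha => ?_⟩
  obtain ⟨t, htG, htc⟩ := hw a ha
  refine ⟨t, htG, ?_⟩
  have : t + (a + (z + w)) = t + (a + z) + w := by
    rw [add_assoc t (a + z) w, add_assoc a z w]
  rw [this]
  exact htc

/-- Piecewise syndeticity is partition regular (two-set version). -/
lemma isPWS_union {B C : Set S} [Nonempty S] (h : IsPWS (B ∪ C)) (hB : ¬ IsPWS B) :
    IsPWS C := by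
  classical
  rw [isPWS_iff] at h hB ⊢
  push_neg at hB
  obtain ⟨G, hGne, hG⟩ := h
  obtain ⟨F₀, hF₀⟩ := hB G hGne
  have hF₀ : ∀ y : S, ∃ a ∈ F₀, ∀ t ∈ G, t + (a + y) ∉ B := by
    intro y
    have := hF₀ y
    simpa using this
  refine ⟨(G ×ˢ F₀).image (fun p => p.1 + p.2), ?_, fun F => ?_⟩
  · obtain ⟨x⟩ := ‹Nonempty S›
    obtain ⟨a, haF₀, -⟩ := hF₀ x
    obtain ⟨t, htG⟩ := hGne
    exact ⟨t + a, Finset.mem_image_of_mem _ (Finset.mk_mem_product htG haF₀)⟩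
  · obtain ⟨z, hz⟩ := hG ((F₀ ×ˢ F).image fun p => p.1 + p.2)
    refine ⟨z, fun b hb => ?_⟩
    obtain ⟨a, haF₀, ha⟩ := hF₀ (b + z)
    have hc : a + b ∈ (F₀ ×ˢ F).image (fun p => p.1 + p.2) :=
      Finset.mem_image_of_mem _ (Finset.mk_mem_product haF₀ hb)
    obtain ⟨t, htG, ht⟩ := hz _ hc
    have heq : t + (a + b + z) = (t + a) + (b + z) := by
      rw [add_assoc a b z, ← add_assoc t a (b + z)]
    rw [heq] at ht
    refine ⟨t + a, Finset.mem_image_of_mem _ (Finset.mk_mem_product htG haF₀), ?_⟩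
    rcases ht with hB' | hC'
    · exact absurd (by rwa [← add_assoc t a (b+z)]) (ha t htG)
    · exact hC'

lemma not_isPWS_compl_sInter [Nonempty S] {t : Set (Set S)} (ht : t.Finite)
    (h : ∀ c ∈ t, ¬ IsPWS cᶜ) : ¬ IsPWS (⋂₀ t)ᶜ := by
  refine Set.Finite.induction_on
    (motive := fun t _ => (∀ c ∈ t, ¬ IsPWS cᶜ) → ¬ IsPWS (⋂₀ t)ᶜ) t ht
    (fun _ => by simpa using not_isPWS_empty) ?_ h
  intro c s hcs hs ih h' hP
  rw [Set.sInter_insert, Set.compl_inter] at hP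
  exact ih (fun d hd => h' d (Set.mem_insert_of_mem _ hd))
    (isPWS_union hP (h' c (Set.mem_insert _ _)))

/-- There is an ultrafilter all of whose members are piecewise syndetic. -/
lemma exists_ultrafilter_all_isPWS [Nonempty S] :
    ∃ r : Ultrafilter S, ∀ B ∈ r, IsPWS B := by
  have hne : NeBot (Filter.generate {c : Set S | ¬ IsPWS cᶜ}) := by
    rw [Filter.generate_neBot_iff]
    intro t hts htf
    by_contra hemp
    rw [Set.not_nonempty_iff_eq_empty] at hemp
    have := not_isPWS_compl_sInter htf (fun c hc => hts hc)
    rw [hemp, Set.compl_empty] at this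
    exact this isPWS_univ
  obtain ⟨r, hr⟩ := Ultrafilter.exists_le (Filter.generate {c : Set S | ¬ IsPWS cᶜ})
  refine ⟨r, fun B hB => ?_⟩
  by_contra hnB
  have : Bᶜ ∈ r := hr (Filter.mem_generate_of_mem (by simpa using hnB))
  exact (Ultrafilter.compl_notMem_iff.mpr hB) this

lemma mem_add_iff (A : Set S) (p q : Ultrafilter S) :
    A ∈ p + q ↔ {x | negAdd x A ∈ q} ∈ p := by
  have h := Ultrafilter.eventually_add p q (· ∈ A)
  simp only [Filter.eventually_iff, Ultrafilter.mem_coe, Set.setOf_mem_eq] at h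
  exact h

omit [AddSemigroup S] in
lemma exists_finset_iInter_subset {f : S → Set S} {t : Set (Set S)} (ht : t.Finite)
    (hsub : t ⊆ Set.range f) : ∃ F : Finset S, (⋂ a ∈ F, f a) ⊆ ⋂₀ t := by
  classical
  refine Set.Finite.induction_on
    (motive := fun t _ => t ⊆ Set.range f → ∃ F : Finset S, (⋂ a ∈ F, f a) ⊆ ⋂₀ t) t ht
    (fun _ => ⟨∅, by simp⟩) ?_ hsub
  intro c s hcs hs ih hsub'
  obtain ⟨F, hF⟩ := ih ((Set.subset_insert _ _).trans hsub')
  obtain ⟨a, rfl⟩ := hsub' (Set.mem_insert _ _)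
  refine ⟨insert a F, ?_⟩
  rw [Set.sInter_insert]
  intro y hy
  simp only [Set.mem_iInter, Finset.mem_insert] at hy
  exact ⟨hy a (Or.inl rfl), hF (Set.mem_iInter₂.mpr fun b hb => hy b (Or.inr hb))⟩

end Aux

/-- `A` is piecewise syndetic iff `cl_{βS}(A)` meets the smallest
two-sided ideal `K(βS)` of `βS`. -/
theorem pws_iff_meets_smallest_ideal {S : Type*} [AddSemigroup S] (A : Set S)
    (K : Set (Ultrafilter S)) (hKne : K.Nonempty)
    (hKideal : ∀ p ∈ K, ∀ q : Ultrafilter S, q + p ∈ K ∧ p + q ∈ K)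
    (hKmin : ∀ I : Set (Ultrafilter S), I.Nonempty →
      (∀ p ∈ I, ∀ q : Ultrafilter S, q + p ∈ I ∧ p + q ∈ I) → K ⊆ I) :
    IsPWS A ↔ ({p : Ultrafilter S | A ∈ p} ∩ K).Nonempty := by
  have hSne : Nonempty S := by
    obtain ⟨u, -⟩ := hKne
    exact Filter.nonempty_of_neBot (u : Filter S)
  constructor
  · rintro ⟨G, hGne, hG⟩
    set B := ⋃ t ∈ G, negAdd t A with hB
    have hne : NeBot (Filter.generate (Set.range fun a => negAdd a B)) := by
      rw [Filter.generate_neBot_iff]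
      intro t hts htf
      obtain ⟨F, hF⟩ := exists_finset_iInter_subset htf hts
      exact (hG F).mono hF
    obtain ⟨q, hq⟩ := Ultrafilter.exists_le (Filter.generate (Set.range fun a => negAdd a B))
    have hqmem : ∀ a : S, negAdd a B ∈ q := fun a =>
      hq (Filter.mem_generate_of_mem ⟨a, rfl⟩)
    obtain ⟨r, hr⟩ := hKne
    have hrq : r + q ∈ K := (hKideal r hr q).2
    have hBmem : B ∈ r + q := by
      rw [mem_add_iff]
      have : {x | negAdd x B ∈ q} = Set.univ := Set.eq_univ_of_forall hqmem
      rw [this]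
      exact Filter.univ_mem
    have : ∃ t ∈ (G : Set S), negAdd t A ∈ r + q := by
      rw [← Ultrafilter.finite_biUnion_mem_iff G.finite_toSet]
      simpa using hBmem
    obtain ⟨t, htG, hmem⟩ := this
    refine ⟨pure t + (r + q), ?_, (hKideal _ hrq (pure t)).1⟩
    rw [Set.mem_setOf_eq, mem_add_iff]
    exact hmem
  · rintro ⟨p, hpA, hpK⟩
    set I : Set (Ultrafilter S) := {r | ∀ B ∈ r, IsPWS B} with hI
    have hIne : I.Nonempty := by
      obtain ⟨r, hr⟩ := exists_ultrafilter_all_isPWS (S := S)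
      exact ⟨r, hr⟩
    have hIideal : ∀ r ∈ I, ∀ q : Ultrafilter S, q + r ∈ I ∧ r + q ∈ I := by
      intro r hrI q
      constructor
      · intro B hB
        rw [mem_add_iff] at hB
        obtain ⟨x, hx⟩ := Ultrafilter.nonempty_of_mem hB
        exact isPWS_of_negAdd (hrI _ hx)
      · intro B hB
        rw [mem_add_iff] at hB
        exact isPWS_of_pull (hrI _ hB)
    exact hKmin I hIne hIideal hpK A hpA
end

section
/- Let S be a Hausdorff semitopological semigroup with wap-compactification S^w, and for x ∈ S^w let x* = {p ∈ βS_d : x ∈ ⋂_{A∈p} cl_{S^w} A}. Then for all x, y ∈ S^w, x* + y* ⊆ (x+y)*. -/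
open Filter Topology

attribute [local instance] Ultrafilter.add Ultrafilter.addSemigroup

/-- For `x` in a compactification of `S`, `x* = {p ∈ βS_d : x ∈ ⋂_{A ∈ p} cl A}`. -/
def ustar {S W : Type*} [TopologicalSpace W] (ε : S → W) (x : W) : Set (Ultrafilter S) :=
  {p | ∀ A : Set S, A ∈ p → x ∈ closure (ε '' A)}

/-- x* + y* ⊆ (x+y)*. -/
theorem ustar_add_subset {S W : Type*} [AddSemigroup S] [TopologicalSpace S] [T2Space S]
    [AddSemigroup W] [TopologicalSpace W] [CompactSpace W] [T2Space W]
    (hScont : ∀ s : S, Continuous (fun x => s + x) ∧ Continuous (fun x => x + s))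
    (hWcont : ∀ w : W, Continuous (fun x => w + x) ∧ Continuous (fun x => x + w))
    (ε : S → W) (hε : Continuous ε) (hhom : ∀ a b : S, ε (a + b) = ε a + ε b)
    (hdense : DenseRange ε)
    (x y : W) :
    ∀ p ∈ ustar ε x, ∀ q ∈ ustar ε y, p + q ∈ ustar ε (x + y) := by
  intro p hp q hq A hA
  set B : Set S := {a | ∀ᶠ b in (q : Filter S), a + b ∈ A} with hB
  have hBp : B ∈ p := (Ultrafilter.eventually_add p q (· ∈ A)).1 hA
  -- For each a ∈ B, ε a + y ∈ closure (ε '' A)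
  have key : ∀ a ∈ B, ε a + y ∈ closure (ε '' A) := by
    intro a ha
    have hyq : y ∈ closure (ε '' {b | a + b ∈ A}) := hq _ ha
    have hc : Continuous (fun w : W => ε a + w) := (hWcont (ε a)).1
    have : ε a + y ∈ closure ((fun w => ε a + w) '' (ε '' {b | a + b ∈ A})) :=
      image_closure_subset_closure_image hc (Set.mem_image_of_mem _ hyq)
    refine closure_mono ?_ this
    rintro _ ⟨_, ⟨b, hb, rfl⟩, rfl⟩
    exact ⟨a + b, hb, hhom a b⟩
  -- x + y ∈ closure ((· + y) '' (ε '' B)) ⊆ closure (closure (ε '' A)) = closure (ε '' A)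
  have hx : x ∈ closure (ε '' B) := hp _ hBp
  have hc : Continuous (fun w : W => w + y) := (hWcont y).2
  have h1 : x + y ∈ closure ((fun w => w + y) '' (ε '' B)) :=
    image_closure_subset_closure_image hc (Set.mem_image_of_mem _ hx)
  have h2 : (fun w => w + y) '' (ε '' B) ⊆ closure (ε '' A) := by
    rintro _ ⟨_, ⟨a, ha, rfl⟩, rfl⟩
    exact key a ha
  have := closure_mono h2 h1
  rwa [closure_closure] at this
end

section
/- Let S be a Hausdorff semitopological semigroup with wap-compactification S^w, and let e ∈ S^w be an idempotent (e + e = e). Then e* = {p ∈ βS_d : e ∈ ⋂_{A∈p} cl_{S^w} A} is a compact subsemigroup of βS_d. -/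
open Filter Topology

attribute [local instance] Ultrafilter.add Ultrafilter.addSemigroup

/-- Membership in `x*` is equivalent to `ε` tending to `x` along the ultrafilter. -/
theorem mem_ustar_iff_tendsto {S W : Type*} [TopologicalSpace W] [CompactSpace W] [T2Space W]
    (ε : S → W) (x : W) (p : Ultrafilter S) :
    p ∈ ustar ε x ↔ Tendsto ε ↑p (𝓝 x) := by
  constructor
  · intro hp
    -- the pushforward ultrafilter converges to some point y; show y = x
    obtain ⟨y, -, hy⟩ := isCompact_univ.ultrafilter_le_nhds (p.map ε) (by simp)
    -- show y = x
    by_contra hne'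
    have hne : y ≠ x := by
      intro h; subst h; exact hne' hy
    obtain ⟨U, V, hU, hV, hyU, hxV, hUV⟩ := t2_separation hne
    obtain ⟨C, hCmem, hCclosed, hCU⟩ := exists_mem_nhds_isClosed_subset (hU.mem_nhds hyU)
    have hA : ε ⁻¹' C ∈ p := hy hCmem
    have hcl : x ∈ closure (ε '' (ε ⁻¹' C)) := hp _ hA
    have : x ∈ C := by
      have h1 : closure (ε '' (ε ⁻¹' C)) ⊆ C := by
        calc closure (ε '' (ε ⁻¹' C)) ⊆ closure C :=
              closure_mono (Set.image_preimage_subset ε C)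
          _ = C := hCclosed.closure_eq
      exact h1 hcl
    exact Set.disjoint_left.mp hUV (hCU this) hxV
  · intro h A hA
    rw [mem_closure_iff_nhds]
    intro U hU
    have h1 : U ∩ ε '' A ∈ p.map ε := inter_mem (h hU) (image_mem_map hA)
    exact (p.map ε).nonempty_of_mem h1

/-- for an idempotent e of the wap-compactification, e* is a compact
subsemigroup of βS_d. -/
theorem ustar_compact_subsemigroup {S W : Type*} [AddSemigroup S] [TopologicalSpace S] [T2Space S]
    [AddSemigroup W] [TopologicalSpace W] [CompactSpace W] [T2Space W]
    (hScont : ∀ s : S, Continuous (fun x => s + x) ∧ Continuous (fun x => x + s))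
    (hWcont : ∀ w : W, Continuous (fun x => w + x) ∧ Continuous (fun x => x + w))
    (ε : S → W) (hε : Continuous ε) (hhom : ∀ a b : S, ε (a + b) = ε a + ε b)
    (hdense : DenseRange ε)
    (e : W) (he : e + e = e) :
    (ustar ε e).Nonempty ∧ IsCompact (ustar ε e) ∧
      ∀ p ∈ ustar ε e, ∀ q ∈ ustar ε e, p + q ∈ ustar ε e := by
  refine ⟨?_, ?_, ?_⟩
  · -- nonempty
    have he' : e ∈ closure (Set.range ε) := hdense e
    obtain ⟨u, hu, hule⟩ := mem_closure_iff_ultrafilter.mp he'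
    have hne : (Filter.comap ε ↑u).NeBot := by
      refine comap_neBot fun t ht => ?_
      have : t ∩ Set.range ε ∈ u := inter_mem ht hu
      obtain ⟨y, hyt, s, rfl⟩ := u.nonempty_of_mem this
      exact ⟨s, hyt⟩
    refine ⟨Ultrafilter.of (Filter.comap ε ↑u), ?_⟩
    rw [mem_ustar_iff_tendsto]
    calc Filter.map ε ↑(Ultrafilter.of (Filter.comap ε ↑u))
        ≤ Filter.map ε (Filter.comap ε ↑u) := map_mono (Ultrafilter.of_le _)
      _ ≤ ↑u := map_comap_le
      _ ≤ 𝓝 e := hule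
  · -- compact
    have hclosed : IsClosed (ustar ε e) := by
      have : ustar ε e = ⋂ A ∈ {A : Set S | e ∉ closure (ε '' A)},
          {p : Ultrafilter S | A ∈ p}ᶜ := by
        ext p
        simp only [Set.mem_iInter, Set.mem_setOf_eq, Set.mem_compl_iff, ustar]
        constructor
        · intro hp A hA hAp; exact hA (hp A hAp)
        · intro hp A hAp; by_contra h; exact hp A h hAp
      rw [this]
      exact isClosed_biInter fun A _ => (ultrafilter_isOpen_basic A).isClosed_compl
    exact hclosed.isCompact
  · -- subsemigroup
    intro p hp q hq
    rw [mem_ustar_iff_tendsto] at hp hq ⊢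
    intro N hN
    obtain ⟨N', hN'sub, hN'open, heN'⟩ := mem_nhds_iff.mp hN
    have hM : {x : W | x + e ∈ N'} ∈ 𝓝 e := by
      have : IsOpen {x : W | x + e ∈ N'} := hN'open.preimage (hWcont e).2
      exact this.mem_nhds (by simpa [Set.mem_setOf_eq, he] using heN')
    have key : ∀ᶠ a in (p : Filter S), ∀ᶠ b in (q : Filter S), ε (a + b) ∈ N' := by
      filter_upwards [hp hM] with a ha
      have hopen : IsOpen {x : W | ε a + x ∈ N'} := hN'open.preimage (hWcont (ε a)).1
      have hmem : {x : W | ε a + x ∈ N'} ∈ 𝓝 e := hopen.mem_nhds ha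
      filter_upwards [hq hmem] with b hb
      rw [hhom]; exact hb
    have : ∀ᶠ m in ↑(p + q), ε m ∈ N' := by
      rw [Ultrafilter.eventually_add]; exact key
    filter_upwards [this] with m hm using hN'sub hm
end

section
/- Let S be a Hausdorff semitopological semigroup, e an idempotent of its wap-compactification S^w, e* the compact subsemigroup {p ∈ βS_d : e ∈ ⋂_{A∈p} cl_{S^w} A} of βS_d, and K the smallest two-sided ideal of e*. For p ∈ e*, the following are equivalent: (a) p ∈ K; (b) for all A ∈ p, the set {x ∈ S : -x + A ∈ p} is syndetic near e; (c) for all r ∈ e*, p ∈ e* + r + p. -/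
open Filter Topology

attribute [local instance] Ultrafilter.add Ultrafilter.addSemigroup

/-- `A ⊆ S` is syndetic near `e`. -/
def SynNear {S W : Type*} [Add S] [TopologicalSpace W] (ε : S → W) (e : W) (A : Set S) : Prop :=
  ∀ U ∈ 𝓝 e, ∃ F : Finset S, F.Nonempty ∧ (∀ t ∈ F, ε t ∈ U) ∧
    ∃ V ∈ 𝓝 e, ∀ y : S, ε y ∈ V → ∃ t ∈ F, t + y ∈ A

section MinIdeal

variable {M : Type*} [AddSemigroup M] [TopologicalSpace M] [CompactSpace M] [T2Space M]

/-- Left ideals of the subsemigroup `T`. -/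
def IsLI (T L : Set M) : Prop := L.Nonempty ∧ L ⊆ T ∧ ∀ a ∈ T, ∀ b ∈ L, a + b ∈ L

/-- Minimal left ideals of the subsemigroup `T`. -/
def IsMinLI (T L : Set M) : Prop := IsLI T L ∧ IsClosed L ∧ ∀ I, IsLI T I → I ⊆ L → I = L

theorem isLI_image (hcont : ∀ a : M, Continuous (· + a)) {T : Set M} (hTc : IsClosed T)
    (hTs : ∀ a ∈ T, ∀ b ∈ T, a + b ∈ T) {x : M} (hx : x ∈ T) :
    IsLI T ((· + x) '' T) ∧ IsClosed ((· + x) '' T) := by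
  constructor
  · refine ⟨⟨x + x, x, hx, rfl⟩, ?_, ?_⟩
    · rintro _ ⟨a, ha, rfl⟩; exact hTs a ha x hx
    · rintro a ha _ ⟨b, hb, rfl⟩
      exact ⟨a + b, hTs a ha b hb, by show (a + b) + x = a + (b + x); rw [add_assoc]⟩
  · exact (hTc.isCompact.image (hcont x)).isClosed

theorem exists_minLI (hcont : ∀ a : M, Continuous (· + a)) {T : Set M}
    (hTc : IsClosed T) (hTs : ∀ a ∈ T, ∀ b ∈ T, a + b ∈ T)
    {L0 : Set M} (h0 : IsLI T L0) (hc0 : IsClosed L0) :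
    ∃ L, IsMinLI T L ∧ L ⊆ L0 := by
  set C : Set (Set M) := {L | IsLI T L ∧ IsClosed L} with hC
  obtain ⟨m, hm0, hmin⟩ : ∃ m, m ⊆ L0 ∧ Minimal (· ∈ C) m := by
    refine zorn_superset_nonempty C ?_ L0 ⟨h0, hc0⟩
    intro c hcC hchain hcne
    have hdir : DirectedOn (· ⊇ ·) c := by
      intro x hx y hy
      rcases eq_or_ne x y with rfl | hne
      · exact ⟨x, hx, subset_rfl, subset_rfl⟩
      · rcases hchain hx hy hne with h | h
        · exact ⟨x, hx, subset_rfl, h⟩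
        · exact ⟨y, hy, h, subset_rfl⟩
    haveI : Nonempty c := hcne.to_subtype
    have hne : (⋂₀ c).Nonempty :=
      IsCompact.nonempty_sInter_of_directed_nonempty_isCompact_isClosed hdir
        (fun U hU => (hcC hU).1.1) (fun U hU => (hcC hU).2.isCompact)
        (fun U hU => (hcC hU).2)
    obtain ⟨L1, hL1⟩ := hcne
    refine ⟨⋂₀ c, ⟨⟨hne, ?_, ?_⟩, isClosed_sInter fun U hU => (hcC hU).2⟩,
      fun s hs => Set.sInter_subset_of_mem hs⟩
    · exact (Set.sInter_subset_of_mem hL1).trans (hcC hL1).1.2.1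
    · intro a ha b hb
      exact Set.mem_sInter.2 fun U hU => (hcC hU).1.2.2 a ha b (Set.mem_sInter.1 hb U hU)
  refine ⟨m, ⟨hmin.1.1, hmin.1.2, ?_⟩, hm0⟩
  intro I hI hIm
  obtain ⟨x, hxI⟩ := hI.1
  have hxT : x ∈ T := hI.2.1 hxI
  have hJ := isLI_image hcont hTc hTs hxT
  have hJI : (· + x) '' T ⊆ I := by
    rintro _ ⟨a, ha, rfl⟩; exact hI.2.2 a ha x hxI
  have hJm : (· + x) '' T ⊆ m := hJI.trans hIm
  have hmJ : m ⊆ (· + x) '' T := hmin.2 (y := (· + x) '' T) ⟨hJ.1, hJ.2⟩ hJm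
  exact subset_antisymm hIm (hmJ.trans hJI)

theorem IsMinLI.eq_image (hcont : ∀ a : M, Continuous (· + a)) {T : Set M} (hTc : IsClosed T)
    (hTs : ∀ a ∈ T, ∀ b ∈ T, a + b ∈ T) {L : Set M} (hL : IsMinLI T L) {x : M} (hx : x ∈ L) :
    (· + x) '' T = L :=
  hL.2.2 _ (isLI_image hcont hTc hTs (hL.1.2.1 hx)).1
    (by rintro _ ⟨a, ha, rfl⟩; exact hL.1.2.2 a ha x hx)

theorem IsMinLI.image_add (hcont : ∀ a : M, Continuous (· + a)) {T : Set M} (hTc : IsClosed T)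
    (hTs : ∀ a ∈ T, ∀ b ∈ T, a + b ∈ T) {L : Set M} (hL : IsMinLI T L) {r : M} (hr : r ∈ T) :
    IsMinLI T ((· + r) '' L) := by
  refine ⟨⟨hL.1.1.image _, ?_, ?_⟩, (hL.2.1.isCompact.image (hcont r)).isClosed, ?_⟩
  · rintro _ ⟨a, ha, rfl⟩; exact hTs a (hL.1.2.1 ha) r hr
  · rintro a ha _ ⟨b, hb, rfl⟩
    exact ⟨a + b, hL.1.2.2 a ha b hb, by show (a + b) + r = a + (b + r); rw [add_assoc]⟩
  · intro I hI hIsub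
    obtain ⟨y, hyI⟩ := hI.1
    obtain ⟨x, hxL, rfl⟩ := hIsub hyI
    refine subset_antisymm hIsub ?_
    rintro _ ⟨z, hz, rfl⟩
    rw [← hL.eq_image hcont hTc hTs hxL] at hz
    obtain ⟨t, ht, rfl⟩ := hz
    show (t + x) + r ∈ I
    rw [add_assoc]
    exact hI.2.2 t ht _ hyI

end MinIdeal

private theorem mem_closure_ultra {α : Type*} (s : Set (Ultrafilter α)) (x : Ultrafilter α)
    (h : ∀ A ∈ x, ∃ y ∈ s, A ∈ y) : x ∈ closure s := by
  rw [(ultrafilterBasis_is_basis (α := α)).mem_closure_iff]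
  rintro o ⟨A, hA, rfl⟩ hx
  obtain ⟨y, hy, hAy⟩ := h A hx
  exact ⟨y, hAy, hy⟩

set_option maxHeartbeats 1000000 in
/-- characterizations of membership in the smallest ideal `K` of `e*`. -/
theorem mem_smallest_ideal_iff {S W : Type*} [AddSemigroup S] [TopologicalSpace S] [T2Space S]
    [AddSemigroup W] [TopologicalSpace W] [CompactSpace W] [T2Space W]
    (hScont : ∀ s : S, Continuous (fun x => s + x) ∧ Continuous (fun x => x + s))
    (hWcont : ∀ w : W, Continuous (fun x => w + x) ∧ Continuous (fun x => x + w))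
    (ε : S → W) (hε : Continuous ε) (hhom : ∀ a b : S, ε (a + b) = ε a + ε b)
    (hdense : DenseRange ε)
    (e : W) (he : e + e = e) (K : Set (Ultrafilter S))
    (hKsub : K ⊆ ustar ε e) (hKne : K.Nonempty)
    (hKideal : ∀ p ∈ K, ∀ q ∈ ustar ε e, q + p ∈ K ∧ p + q ∈ K)
    (hKmin : ∀ I : Set (Ultrafilter S), I.Nonempty → I ⊆ ustar ε e →
      (∀ p ∈ I, ∀ q ∈ ustar ε e, q + p ∈ I ∧ p + q ∈ I) → K ⊆ I)
    (p : Ultrafilter S) (hp : p ∈ ustar ε e) :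
    ((p ∈ K) ↔ ∀ A : Set S, A ∈ p → SynNear ε e {x : S | {y : S | x + y ∈ A} ∈ p}) ∧
    ((p ∈ K) ↔ ∀ r ∈ ustar ε e, ∃ q ∈ ustar ε e, q + (r + p) = p) := by
  classical
  set T : Set (Ultrafilter S) := ustar ε e with hTdef
  have hcont : ∀ a : Ultrafilter S, Continuous (· + a) := fun a =>
    Ultrafilter.continuous_add_left a
  -- membership in sums of ultrafilters
  have hmem : ∀ (U V : Ultrafilter S) (A : Set S),
      A ∈ U + V ↔ {m | {m' | m + m' ∈ A} ∈ V} ∈ U := fun _ _ _ => Iff.rfl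
  -- characterization of T via the comap filter
  have h1 : ∀ q : Ultrafilter S, q ∈ T ↔ ∀ V ∈ 𝓝 e, ε ⁻¹' V ∈ q := by
    intro q
    constructor
    · intro hq V hV
      by_contra hno
      have hc : (ε ⁻¹' V)ᶜ ∈ q := Ultrafilter.compl_mem_iff_notMem.2 hno
      have := hq _ hc
      rw [mem_closure_iff_nhds] at this
      obtain ⟨_, hwV, ⟨x, hx, rfl⟩⟩ := this V hV
      exact hx hwV
    · intro hq A hA
      rw [mem_closure_iff_nhds]
      intro t ht
      obtain ⟨x, hxA, hxt⟩ := Ultrafilter.nonempty_of_mem (inter_mem hA (hq t ht))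
      exact ⟨ε x, hxt, Set.mem_image_of_mem ε hxA⟩
  have hTc : IsClosed T := by
    have : T = ⋂ V ∈ {V : Set W | V ∈ 𝓝 e}, {q : Ultrafilter S | ε ⁻¹' V ∈ q} := by
      ext q
      simp only [Set.mem_iInter, Set.mem_setOf_eq]
      exact h1 q
    rw [this]
    exact isClosed_biInter fun V hV => ultrafilter_isClosed_basic _
  -- any ultrafilter finer than the comap filter lies in T
  have hfineT : ∀ q : Ultrafilter S, (↑q : Filter S) ≤ comap ε (𝓝 e) → q ∈ T := by
    intro q hq
    exact (h1 q).2 fun V hV => Filter.le_def.1 hq _ (preimage_mem_comap hV)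
  -- T is a subsemigroup
  have hTs : ∀ a ∈ T, ∀ b ∈ T, a + b ∈ T := by
    intro P hP Q hQ A hA
    have hD : {x | {y | x + y ∈ A} ∈ Q} ∈ P := (hmem P Q A).1 hA
    have step1 : ∀ x ∈ {x | {y | x + y ∈ A} ∈ Q}, ε x + e ∈ closure (ε '' A) := by
      intro x hx
      have h2 : e ∈ closure (ε '' {y | x + y ∈ A}) := hQ _ hx
      have h3 : ε x + e ∈ closure ((fun w => ε x + w) '' (ε '' {y | x + y ∈ A})) :=
        image_closure_subset_closure_image (hWcont (ε x)).1 (Set.mem_image_of_mem _ h2)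
      refine closure_mono ?_ h3
      rintro _ ⟨_, ⟨y, hy, rfl⟩, rfl⟩
      exact ⟨x + y, hy, hhom x y⟩
    have hG : IsClosed {w : W | w + e ∈ closure (ε '' A)} :=
      IsClosed.preimage (hWcont e).2 isClosed_closure
    have hsub : closure (ε '' {x | {y | x + y ∈ A} ∈ Q}) ⊆ {w : W | w + e ∈ closure (ε '' A)} := by
      rw [hG.closure_subset_iff]
      rintro _ ⟨x, hx, rfl⟩
      exact step1 x hx
    have := hsub (hP _ hD)
    simpa [he] using this
  have hTne : T.Nonempty := hKne.imp fun k hk => hKsub hk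
  have hTLI : IsLI T T := ⟨hTne, subset_rfl, hTs⟩
  -- minimal left ideals are contained in K
  have hminsubK : ∀ L, IsMinLI T L → L ⊆ K := by
    intro L hL
    obtain ⟨k, hk⟩ := hKne
    obtain ⟨x0, hx0⟩ := hL.1.1
    have hkx : k + x0 ∈ L := hL.1.2.2 k (hKsub hk) x0 hx0
    have hkxK : k + x0 ∈ K := (hKideal k hk x0 (hL.1.2.1 hx0)).2
    intro z hz
    rw [← hL.eq_image hcont hTc hTs hkx] at hz
    obtain ⟨t, ht, rfl⟩ := hz
    exact (hKideal _ hkxK t ht).1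
  -- K is contained in the union of minimal left ideals
  have hKsubU : K ⊆ {q | ∃ L, IsMinLI T L ∧ q ∈ L} := by
    refine hKmin _ ?_ ?_ ?_
    · obtain ⟨L, hL, _⟩ := exists_minLI hcont hTc hTs hTLI hTc
      obtain ⟨q, hq⟩ := hL.1.1
      exact ⟨q, L, hL, hq⟩
    · rintro q ⟨L, hL, hq⟩
      exact hL.1.2.1 hq
    · rintro a ⟨L, hL, ha⟩ b hb
      constructor
      · exact ⟨L, hL, hL.1.2.2 b hb a ha⟩
      · exact ⟨(· + b) '' L, hL.image_add hcont hTc hTs hb, ⟨a, ha, rfl⟩⟩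
  -- (a) → (c)
  have hac : p ∈ K → ∀ r ∈ T, ∃ q ∈ T, q + (r + p) = p := by
    intro hpK r hr
    obtain ⟨L, hL, hpL⟩ := hKsubU hpK
    have hrp : r + p ∈ L := hL.1.2.2 r hr p hpL
    have himg := hL.eq_image hcont hTc hTs hrp
    rw [← himg] at hpL
    obtain ⟨q, hq, hqe⟩ := hpL
    exact ⟨q, hq, hqe⟩
  -- (c) → (a)
  have hca : (∀ r ∈ T, ∃ q ∈ T, q + (r + p) = p) → p ∈ K := by
    intro h
    obtain ⟨L, hL, _⟩ := exists_minLI hcont hTc hTs hTLI hTc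
    obtain ⟨r, hrL⟩ := hL.1.1
    obtain ⟨q, hq, hqe⟩ := h r (hL.1.2.1 hrL)
    have hqrK : q + r ∈ K := hminsubK L hL (hL.1.2.2 q hq r hrL)
    have heq : (q + r) + p = p := by rw [add_assoc, hqe]
    exact heq ▸ (hKideal _ hqrK p hp).2
  -- (a) → (b)
  have hab : p ∈ K → ∀ A ∈ p, SynNear ε e {x : S | {y : S | x + y ∈ A} ∈ p} := by
    intro hpK A hA
    by_contra hsyn
    simp only [SynNear] at hsyn
    push_neg at hsyn
    obtain ⟨U₀, hU₀, hfail⟩ := hsyn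
    set B : Set S := {x : S | {y : S | x + y ∈ A} ∈ p} with hBdef
    -- build an ultrafilter q₀ ∈ T avoiding all translates of B from inside U₀
    set f : Filter S := comap ε (𝓝 e) ⊓
      ⨅ t : {t : S // ε t ∈ U₀}, 𝓟 {y | t.1 + y ∈ B}ᶜ with hfdef
    have hbasis : f.HasBasis
        (fun i : Set W × Set {t : S // ε t ∈ U₀} => i.1 ∈ 𝓝 e ∧ i.2.Finite)
        (fun i => ε ⁻¹' i.1 ∩ ⋂ t ∈ i.2, {y | t.1 + y ∈ B}ᶜ) :=
      ((𝓝 e).basis_sets.comap ε).inf (hasBasis_iInf_principal_finite _)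
    haveI hfne : f.NeBot := by
      rw [hbasis.neBot_iff]
      rintro ⟨V, I⟩ ⟨hV, hI⟩
      rcases I.eq_empty_or_nonempty with rfl | hIne
      · obtain ⟨y, hy⟩ := hdense.exists_mem_open isOpen_interior
          ⟨e, mem_interior_iff_mem_nhds.2 hV⟩
        refine ⟨y, ?_, by simp⟩
        exact Set.mem_preimage.2 (interior_subset hy)
      · set F : Finset S := hI.toFinset.image Subtype.val with hFdef
        have hFne : F.Nonempty := by
          obtain ⟨t, ht⟩ := hIne
          exact ⟨t.1, Finset.mem_image.2 ⟨t, hI.mem_toFinset.2 ht, rfl⟩⟩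
        have hFU : ∀ t ∈ F, ε t ∈ U₀ := by
          intro t ht
          obtain ⟨s, _, rfl⟩ := Finset.mem_image.1 ht
          exact s.2
        obtain ⟨y, hyV, hyB⟩ := hfail F hFne hFU V hV
        refine ⟨y, hyV, Set.mem_iInter₂.2 fun t htI => ?_⟩
        exact hyB t.1 (Finset.mem_image.2 ⟨t, hI.mem_toFinset.2 htI, rfl⟩)
    set q₀ : Ultrafilter S := Ultrafilter.of f with hq₀def
    have hq₀f : (↑q₀ : Filter S) ≤ f := Ultrafilter.of_le f
    have hq₀T : q₀ ∈ T := hfineT q₀ (hq₀f.trans inf_le_left)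
    have hbad : ∀ t : S, ε t ∈ U₀ → {y | t + y ∈ B} ∉ q₀ := by
      intro t ht
      have : {y | t + y ∈ B}ᶜ ∈ f :=
        mem_inf_of_right (mem_iInf_of_mem ⟨t, ht⟩ (mem_principal_self _))
      exact Ultrafilter.compl_mem_iff_notMem.1 (Filter.le_def.1 hq₀f _ this)
    obtain ⟨w, hw, hwe⟩ := hac hpK q₀ hq₀T
    rw [← add_assoc] at hwe
    rw [← hwe] at hA
    have hAB : B ∈ w + q₀ := (hmem _ _ _).1 hA
    have hD : {x | {y | x + y ∈ B} ∈ q₀} ∈ w := (hmem _ _ _).1 hAB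
    have := hw _ hD
    rw [mem_closure_iff_nhds] at this
    obtain ⟨_, hwU, ⟨x, hx, rfl⟩⟩ := this U₀ hU₀
    exact hbad x hwU hx
  -- (b) → (a)
  have hba : (∀ A ∈ p, SynNear ε e {x : S | {y : S | x + y ∈ A} ∈ p}) → p ∈ K := by
    intro hsyn
    have hTp := isLI_image hcont hTc hTs hp
    obtain ⟨L, hL, hLsub⟩ := exists_minLI hcont hTc hTs hTp.1 hTp.2
    obtain ⟨q, hqL⟩ := hL.1.1
    have hqK : q ∈ K := hminsubK L hL hqL
    obtain ⟨s, hsT, rfl⟩ := hLsub hqL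
    -- claim p ∈ (· + (s + p)) '' T
    have hTqc : IsClosed ((· + (s + p)) '' T) := (isLI_image hcont hTc hTs (hTs s hsT p hp)).2
    have hpTq : p ∈ (· + (s + p)) '' T := by
      rw [← hTqc.closure_eq]
      refine mem_closure_ultra _ _ ?_
      intro A hA
      -- for each A ∈ p find w ∈ T with A ∈ w + (s + p)
      have hDcl : ∀ V ∈ 𝓝 e, ∃ x : S, ε x ∈ V ∧ {y | x + y ∈ A} ∈ s + p := by
        intro V hV
        obtain ⟨F, hFne, hFU, V', hV', hcov⟩ := hsyn A hA V hV
        have hV's : ε ⁻¹' V' ∈ s := (h1 s).1 hsT V' hV'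
        have hsub : ε ⁻¹' V' ⊆ ⋃ t ∈ F, {z | t + z ∈ {x : S | {y : S | x + y ∈ A} ∈ p}} := by
          intro z hz
          obtain ⟨t, htF, htB⟩ := hcov z hz
          exact Set.mem_biUnion htF htB
        obtain ⟨t, htF, hts⟩ := (Ultrafilter.finite_biUnion_mem_iff F.finite_toSet).1
          (mem_of_superset hV's hsub)
        refine ⟨t, hFU t htF, ?_⟩
        rw [hmem]
        have hset : {m | {m' | m + m' ∈ {y | t + y ∈ A}} ∈ p} =
            {z | t + z ∈ {x : S | {y : S | x + y ∈ A} ∈ p}} := by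
          ext z
          simp only [Set.mem_setOf_eq, ← add_assoc]
        rw [hset]
        exact hts
      set g : Filter S := 𝓟 {x | {y | x + y ∈ A} ∈ s + p} ⊓ comap ε (𝓝 e) with hgdef
      have hgbasis : g.HasBasis (fun i : Unit × Set W => True ∧ i.2 ∈ 𝓝 e)
          (fun i => {x | {y | x + y ∈ A} ∈ s + p} ∩ ε ⁻¹' i.2) :=
        (hasBasis_principal _).inf ((𝓝 e).basis_sets.comap ε)
      haveI hgne : g.NeBot := by
        rw [hgbasis.neBot_iff]
        rintro ⟨_, V⟩ ⟨-, hV⟩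
        obtain ⟨x, hxV, hxD⟩ := hDcl V hV
        exact ⟨x, hxD, hxV⟩
      set w : Ultrafilter S := Ultrafilter.of g with hwdef
      have hwg : (↑w : Filter S) ≤ g := Ultrafilter.of_le g
      have hwT : w ∈ T := hfineT w (hwg.trans inf_le_right)
      have hDw : {x | {y | x + y ∈ A} ∈ s + p} ∈ w :=
        Filter.le_def.1 hwg _ (mem_inf_of_left (mem_principal_self _))
      exact ⟨w + (s + p), ⟨w, hwT, rfl⟩, (hmem _ _ _).2 hDw⟩
    obtain ⟨v, hvT, hve⟩ := hpTq
    exact hve ▸ (hKideal _ hqK v hvT).1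
  exact ⟨⟨hab, hba⟩, ⟨hac, hca⟩⟩
end

section
/- Let S be a commutative semitopological semigroup, e an idempotent of S^w, and A ⊆ S a J-set near e. Then for every m ∈ ℕ, every finite nonempty F ⊆ 𝒯_e, and every neighborhood U of e, there exist a ∈ U ∩ S and a nonempty finite H ⊆ ℕ with min H > m such that for each f ∈ F, a + ∑_{t∈H} f(t) ∈ A. -/
open Filter Topology

attribute [local instance] Ultrafilter.add Ultrafilter.addSemigroup

open Classical in
/-- The ordinary upper density of a set of naturals. -/
noncomputable def upDens (B : Set ℕ) : ℝ :=
  Filter.limsup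
    (fun n : ℕ => (((Finset.Icc 1 n).filter (fun k => k ∈ B)).card : ℝ) / (n : ℝ))
    Filter.atTop

open Classical in
lemma upDens_shift (B : Set ℕ) (c : ℕ) : upDens B ≤ upDens {n | n + c ∈ B} := by
  classical
  set B' : Set ℕ := {n | n + c ∈ B} with hB'
  set a : ℕ → ℝ := fun n => (((Finset.Icc 1 n).filter (fun k => k ∈ B)).card : ℝ) / (n : ℝ) with ha
  set a' : ℕ → ℝ := fun n => (((Finset.Icc 1 n).filter (fun k => k ∈ B')).card : ℝ) / (n : ℝ) with ha'
  have hcard : ∀ N : ℕ, ((Finset.Icc 1 N).filter (fun k => k ∈ B)).card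
      ≤ ((Finset.Icc 1 N).filter (fun k => k ∈ B')).card + c := by
    intro N
    have h1 : ((Finset.Icc 1 N).filter (fun k => k ∈ B)).card ≤
        ((Finset.Icc (c+1) N).filter (fun k => k ∈ B)).card + c := by
      have hsub : (Finset.Icc 1 N).filter (fun k => k ∈ B) ⊆
          ((Finset.Icc (c+1) N).filter (fun k => k ∈ B)) ∪ Finset.Icc 1 c := by
        intro n hn
        simp only [Finset.mem_filter, Finset.mem_Icc, Finset.mem_union] at hn ⊢
        obtain ⟨⟨h1, h2⟩, hB⟩ := hn
        by_cases hc : c + 1 ≤ n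
        · exact Or.inl ⟨⟨hc, h2⟩, hB⟩
        · exact Or.inr ⟨h1, by omega⟩
      calc ((Finset.Icc 1 N).filter (fun k => k ∈ B)).card
          ≤ (((Finset.Icc (c+1) N).filter (fun k => k ∈ B)) ∪ Finset.Icc 1 c).card :=
            Finset.card_le_card hsub
        _ ≤ ((Finset.Icc (c+1) N).filter (fun k => k ∈ B)).card + (Finset.Icc 1 c).card :=
            Finset.card_union_le _ _
        _ = ((Finset.Icc (c+1) N).filter (fun k => k ∈ B)).card + c := by
            rw [Nat.card_Icc]; omega
    have h2 : ((Finset.Icc (c+1) N).filter (fun k => k ∈ B)).card ≤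
        ((Finset.Icc 1 N).filter (fun k => k ∈ B')).card := by
      apply Finset.card_le_card_of_injOn (fun n => n - c)
      · intro n hn
        simp only [Finset.mem_coe, Finset.mem_filter, Finset.mem_Icc] at hn ⊢
        constructor
        · omega
        · show n - c + c ∈ B
          have : n - c + c = n := by omega
          rw [this]; exact hn.2
      · intro x hx y hy hxy
        simp only [Finset.coe_filter, Set.mem_setOf_eq, Finset.mem_Icc] at hx hy
        have hxy' : x - c = y - c := hxy
        obtain ⟨⟨hx1, _⟩, _⟩ := hx
        obtain ⟨⟨hy1, _⟩, _⟩ := hy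
        omega
    omega
  have hbdd : ∀ (C : Set ℕ) (N : ℕ),
      (((Finset.Icc 1 N).filter (fun k => k ∈ C)).card : ℝ) / (N : ℝ) ≤ 1 := by
    intro C N
    rcases Nat.eq_zero_or_pos N with h | h
    · simp [h]
    · rw [div_le_one (by positivity)]
      have := Finset.card_le_card (Finset.filter_subset (fun k => k ∈ C) (Finset.Icc 1 N))
      rw [Nat.card_Icc] at this
      exact_mod_cast this.trans (by omega)
  have hnn : ∀ (C : Set ℕ) (N : ℕ),
      (0:ℝ) ≤ (((Finset.Icc 1 N).filter (fun k => k ∈ C)).card : ℝ) / (N : ℝ) := by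
    intro C N; positivity
  have hbdd_a : IsBoundedUnder (· ≤ ·) atTop a := isBoundedUnder_of ⟨1, hbdd B⟩
  have hbdd_a' : IsBoundedUnder (· ≤ ·) atTop a' := isBoundedUnder_of ⟨1, hbdd B'⟩
  have hcob_a : IsCoboundedUnder (· ≤ ·) atTop a :=
    (isBoundedUnder_of (f := atTop) (u := a) ⟨0, fun N => hnn B N⟩ :
      IsBoundedUnder (· ≥ ·) atTop a).isCoboundedUnder_le
  have hcob_a' : IsCoboundedUnder (· ≤ ·) atTop a' :=
    (isBoundedUnder_of (f := atTop) (u := a') ⟨0, fun N => hnn B' N⟩ :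
      IsBoundedUnder (· ≥ ·) atTop a').isCoboundedUnder_le
  have key : ∀ δ : ℝ, 0 < δ → upDens B ≤ upDens B' + δ := by
    intro δ hδ
    have hev : ∀ᶠ N : ℕ in atTop, a N ≤ a' N + δ := by
      filter_upwards [eventually_ge_atTop (max 1 ⌈(c : ℝ) / δ⌉₊)] with N hN
      have hN1 : 1 ≤ N := le_trans (le_max_left _ _) hN
      have hNc : (c : ℝ) / δ ≤ N := by
        calc (c : ℝ) / δ ≤ (⌈(c : ℝ) / δ⌉₊ : ℝ) := Nat.le_ceil _
          _ ≤ N := by exact_mod_cast le_trans (le_max_right _ _) hN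
      have hNpos : (0:ℝ) < N := by exact_mod_cast hN1
      have hcN : (c : ℝ) / N ≤ δ := by
        rw [div_le_iff₀ hNpos]
        rw [div_le_iff₀ hδ] at hNc
        linarith [mul_comm δ (N:ℝ)]
      have := hcard N
      have hcast : (((Finset.Icc 1 N).filter (fun k => k ∈ B)).card : ℝ)
          ≤ (((Finset.Icc 1 N).filter (fun k => k ∈ B')).card : ℝ) + c := by exact_mod_cast this
      have : a N ≤ a' N + (c : ℝ) / N := by
        simp only [ha, ha']
        rw [← add_div]
        gcongr
      linarith
    calc upDens B = limsup a atTop := rfl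
      _ ≤ limsup (fun N => a' N + δ) atTop := by
          exact limsup_le_limsup hev hcob_a
            (isBoundedUnder_of ⟨1 + δ, fun N => by have := hbdd B' N; simp only [ha'] at *; linarith⟩)
      _ = limsup a' atTop + δ := limsup_add_const atTop a' δ hbdd_a' hcob_a'
      _ = upDens B' + δ := rfl
  exact le_of_forall_pos_le_add key

/-- `𝒯_e`: sequences `f : ℕ → S` with `d̄({n : f(n) ∈ U}) > 0` for every neighborhood `U`
of `e` in the compactification. -/
def Te {S W : Type*} [TopologicalSpace W] (ε : S → W) (e : W) : Set (ℕ → S) :=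
  {f | ∀ U ∈ 𝓝 e, 0 < upDens {n | ε (f n) ∈ U}}

def addEmb (c : ℕ) : ℕ ↪ ℕ := ⟨fun n => n + c, fun a b h => by simpa using h⟩

lemma sort_map_add (H : Finset ℕ) (c : ℕ) :
    (H.map (addEmb c)).sort (· ≤ ·) = (H.sort (· ≤ ·)).map (fun n => n + c) := by
  refine List.Perm.eq_of_pairwise' (r := ((· ≤ ·) : ℕ → ℕ → Prop)) ?_ ?_ ?_
  rotate_right
  · rw [← Multiset.coe_eq_coe]
    rw [Finset.sort_eq, ← Multiset.map_coe, Finset.sort_eq]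
    rfl
  · exact Finset.pairwise_sort _ _
  · exact List.Pairwise.map _ (fun a b h => by omega) (Finset.pairwise_sort H (· ≤ ·))

lemma seqSum_map_add {S : Type*} [AddSemigroup S] (f : ℕ → S) (H : Finset ℕ)
    (hH : H.Nonempty) (c : ℕ) :
    seqSum f (H.map (addEmb c)) = seqSum (fun n => f (n + c)) H := by
  have hlist : ((H.map (addEmb c)).sort (· ≤ ·)).map f
      = (H.sort (· ≤ ·)).map (fun n => f (n + c)) := by
    rw [sort_map_add, List.map_map]
    rfl
  have hne : H.sort (· ≤ ·) ≠ [] := by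
    intro h
    have := Finset.sort_eq H (· ≤ ·)
    rw [h] at this
    exact hH.ne_empty (Finset.val_eq_zero.mp this.symm)
  obtain ⟨x, l, hxl⟩ := List.exists_cons_of_ne_nil hne
  unfold seqSum
  rw [hlist, hxl]
  simp

/-- `A` is a J-set near `e`. -/
def JSetNear {S W : Type*} [AddCommSemigroup S] [TopologicalSpace W]
    (ε : S → W) (e : W) (A : Set S) : Prop :=
  ∀ F : Finset (ℕ → S), F.Nonempty → ↑F ⊆ Te ε e →
    ∀ U ∈ 𝓝 e, ∃ a : S, ε a ∈ U ∧ ∃ H : Finset ℕ, H.Nonempty ∧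
      ∀ f ∈ F, a + seqSum f H ∈ A

lemma Te_shift {S W : Type*} [TopologicalSpace W] (ε : S → W) (e : W)
    (f : ℕ → S) (hf : f ∈ Te ε e) (c : ℕ) : (fun n => f (n + c)) ∈ Te ε e := by
  intro U hU
  have := upDens_shift {n | ε (f n) ∈ U} c
  have h0 := hf U hU
  calc (0:ℝ) < upDens {n | ε (f n) ∈ U} := h0
    _ ≤ upDens {n | n + c ∈ {n | ε (f n) ∈ U}} := this
    _ = upDens {n | ε (f (n + c)) ∈ U} := rfl

/-- in a J-set near `e` one can choose `H` with `min H > m`. -/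
theorem jSetNear_min_gt {S W : Type*}
    [AddCommSemigroup S] [TopologicalSpace S] [T2Space S]
    [AddSemigroup W] [TopologicalSpace W] [CompactSpace W] [T2Space W]
    (hScont : ∀ s : S, Continuous (fun x => s + x) ∧ Continuous (fun x => x + s))
    (hWcont : ∀ w : W, Continuous (fun x => w + x) ∧ Continuous (fun x => x + w))
    (ε : S → W) (hε : Continuous ε) (hhom : ∀ a b : S, ε (a + b) = ε a + ε b)
    (hdense : DenseRange ε)
    (e : W) (he : e + e = e) (A : Set S) (hA : JSetNear ε e A) :
    ∀ m : ℕ, ∀ F : Finset (ℕ → S), F.Nonempty → ↑F ⊆ Te ε e →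
      ∀ U ∈ 𝓝 e, ∃ a : S, ε a ∈ U ∧ ∃ H : Finset ℕ, H.Nonempty ∧ (∀ t ∈ H, m < t) ∧
        ∀ f ∈ F, a + seqSum f H ∈ A := by
  classical
  intro m F hF hFTe U hU
  set c := m + 1 with hc
  set F' : Finset (ℕ → S) := F.image (fun f => fun n => f (n + c)) with hF'
  have hF'ne : F'.Nonempty := hF.image _
  have hF'Te : ↑F' ⊆ Te ε e := by
    intro g hg
    simp only [hF', Finset.coe_image, Set.mem_image, Finset.mem_coe] at hg
    obtain ⟨f, hfF, rfl⟩ := hg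
    exact Te_shift ε e f (hFTe hfF) c
  obtain ⟨a, haU, H, hHne, hHA⟩ := hA F' hF'ne hF'Te U hU
  refine ⟨a, haU, H.map (addEmb c), hHne.map (f := addEmb c), ?_, ?_⟩
  · intro t ht
    simp only [Finset.mem_map, addEmb] at ht
    obtain ⟨s, _, rfl⟩ := ht
    show m < s + c
    omega
  · intro f hfF
    have hg : (fun n => f (n + c)) ∈ F' := Finset.mem_image_of_mem _ hfF
    have := hHA _ hg
    rwa [← seqSum_map_add f H hHne c] at this
end
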